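/- arXiv:1903.01607 — 2 statements merged into one kernel-verified Lean document; each statement's English description precedes it below -/
import Mathlib

section
/- A function h : [0,1] × S^{n−1} → ℝ is the support function of a (unique) fuzzy vector if and only if: (VS1) for each α ∈ [0,1], h(α, −) extends to a sublinear function on ℝⁿ; and (VS2) for each x ∈ S^{n−1}, h(−, x) : [0,1] → ℝ is non-increasing, left-continuous on (0,1], and right-continuous at 0. The fuzzy vector is then given by u(t) = sup{α : ⟨t, x⟩ ≤ h(α, x) for all x ∈ S^{n−1}}. -/
open scoped RealInnerProductSpace Pointwise

noncomputable section

/-- A fuzzy vector: regular, compactly supported, quasi-concave, upper semi-continuous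
function `u : ℝⁿ → [0,1]`. -/
def IsFuzzyVector {n : ℕ} (u : EuclideanSpace ℝ (Fin n) → ℝ) : Prop :=
  (∀ t, u t ∈ Set.Icc (0:ℝ) 1) ∧
  (∃ t, u t = 1) ∧
  IsCompact (closure {t | 0 < u t}) ∧
  (∀ s t : EuclideanSpace ℝ (Fin n), ∀ lam ∈ Set.Icc (0:ℝ) 1,
      min (u s) (u t) ≤ u (lam • s + (1 - lam) • t)) ∧
  (∀ α : ℝ, IsClosed {t | α ≤ u t})

/-- The α-level sets of a fuzzy vector. -/
def levelSet {n : ℕ} (u : EuclideanSpace ℝ (Fin n) → ℝ) (α : ℝ) :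
    Set (EuclideanSpace ℝ (Fin n)) :=
  if α = 0 then closure {t | 0 < u t} else {t | α ≤ u t}

/-- The support function of a fuzzy vector. -/
def fuzzySupp {n : ℕ} (u : EuclideanSpace ℝ (Fin n) → ℝ) (α : ℝ)
    (x : EuclideanSpace ℝ (Fin n)) : ℝ :=
  sSup ((fun t => ⟪t, x⟫) '' levelSet u α)

/-- Addition of fuzzy vectors by Zadeh's extension principle. -/
def fuzzyAdd {n : ℕ} (v w : EuclideanSpace ℝ (Fin n) → ℝ) :
    EuclideanSpace ℝ (Fin n) → ℝ :=
  fun t => sSup {m : ℝ | ∃ r s, r + s = t ∧ m = min (v r) (w s)}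

/-!
The candidate level sets are `K α = {t | ⟪t, x⟫ ≤ h α x for every unit x}`. By Hahn–Banach,
(VS1) makes each `K α` a nonempty compact convex set whose support function is `h α`, and (VS2)
makes `α ↦ K α` decreasing with `K α = ⋂_{β < α} K β`; a nested family of this kind is the family
of level sets of `u t = sup {α | t ∈ K α}`. At `α = 0` the support functions of `u` and `h` agree
because both are right-continuous there and agree on `(0, 1]`.

Conversely, the level sets of a fuzzy vector are compact and convex, so by separation they are
recovered from their support functions; this gives uniqueness and the formula for `u`. Sublinearity
and monotonicity of its support function are immediate, and left-continuity follows by compactness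
from `{α ≤ u} = ⋂_{β < α} {β ≤ u}`.
-/

open Set Filter Topology

section SupportFunction

variable {E : Type*} [NormedAddCommGroup E] [InnerProductSpace ℝ E]

theorem norm_inv_norm_smul_of_ne_zero {y : E} (hy : y ≠ 0) : ‖‖y‖⁻¹ • y‖ = 1 := by
  rw [norm_smul, norm_inv, norm_norm, inv_mul_cancel₀ (norm_ne_zero_iff.2 hy)]

def supportFunction (K : Set E) (x : E) : ℝ :=
  sSup ((fun t => ⟪t, x⟫) '' K)

def supportSet (g : E → ℝ) : Set E :=
  {t | ∀ x, ‖x‖ = 1 → ⟪t, x⟫ ≤ g x}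

theorem le_supportFunction {K : Set E} (hK : IsCompact K) {t : E} (ht : t ∈ K) (x : E) :
    ⟪t, x⟫ ≤ supportFunction K x :=
  le_csSup (hK.bddAbove_image (by fun_prop)) (mem_image_of_mem _ ht)

theorem supportFunction_le {K : Set E} (hK : K.Nonempty) {x : E} {c : ℝ}
    (h : ∀ t ∈ K, ⟪t, x⟫ ≤ c) : supportFunction K x ≤ c :=
  csSup_le (hK.image _) (forall_mem_image.2 h)

theorem IsCompact.supportFunction_lt_iff {K : Set E} (hK : IsCompact K) (hne : K.Nonempty)
    (x : E) (c : ℝ) : supportFunction K x < c ↔ ∀ t ∈ K, ⟪t, x⟫ < c :=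
  hK.sSup_lt_iff_of_continuous hne (by fun_prop) c

theorem supportFunction_mono {K L : Set E} (hL : IsCompact L) (hK : K.Nonempty) (hKL : K ⊆ L)
    (x : E) : supportFunction K x ≤ supportFunction L x :=
  supportFunction_le hK fun _ ht => le_supportFunction hL (hKL ht) x

theorem supportFunction_smul (K : Set E) {c : ℝ} (hc : 0 ≤ c) (x : E) :
    supportFunction K (c • x) = c * supportFunction K x := by
  simp only [supportFunction, real_inner_smul_right, ← smul_eq_mul, ← Real.sSup_smul_of_nonneg hc,
    ← image_smul, image_image]

theorem supportFunction_add_le {K : Set E} (hK : IsCompact K) (hne : K.Nonempty) (x y : E) :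
    supportFunction K (x + y) ≤ supportFunction K x + supportFunction K y :=
  supportFunction_le hne fun t ht => by
    rw [inner_add_right]
    exact add_le_add (le_supportFunction hK ht x) (le_supportFunction hK ht y)

theorem supportFunction_closure {S : Set E} (hS : IsCompact (closure S)) (hne : S.Nonempty)
    (x : E) : supportFunction (closure S) x = supportFunction S x := by
  refine le_antisymm (supportFunction_le hne.closure fun t ht => ?_)
    (supportFunction_mono hS hne subset_closure x)
  have hcl : closure S ⊆ {t | ⟪t, x⟫ ≤ supportFunction S x} :=
    closure_minimal (fun s hs => le_csSup ((hS.bddAbove_image (f := (⟪·, x⟫)) (by fun_prop)).mono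
      (image_mono subset_closure)) (mem_image_of_mem _ hs))
      (isClosed_le (by fun_prop) (by fun_prop))
  exact hcl ht

theorem supportSet_congr {g g' : E → ℝ} (h : ∀ x, ‖x‖ = 1 → g x = g' x) :
    supportSet g = supportSet g' := by
  ext t
  exact forall₂_congr fun x hx => by rw [h x hx]

theorem supportSet_mono {g g' : E → ℝ} (h : ∀ x, ‖x‖ = 1 → g x ≤ g' x) :
    supportSet g ⊆ supportSet g' :=
  fun _ ht x hx => (ht x hx).trans (h x hx)

theorem mem_supportSet_iff_of_smul {g : E → ℝ} (hg_smul : ∀ c : ℝ, 0 ≤ c → ∀ x, g (c • x) = c * g x)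
    {t : E} : t ∈ supportSet g ↔ ∀ y, ⟪t, y⟫ ≤ g y := by
  refine ⟨fun ht y => ?_, fun ht x _ => ht x⟩
  rcases eq_or_ne y 0 with rfl | hy
  · simpa using (hg_smul 0 le_rfl 0).ge
  have hy' : ‖y‖ ≠ 0 := norm_ne_zero_iff.2 hy
  calc ⟪t, y⟫ = ‖y‖ * ⟪t, ‖y‖⁻¹ • y⟫ := by rw [real_inner_smul_right, mul_inv_cancel_left₀ hy']
    _ ≤ ‖y‖ * g (‖y‖⁻¹ • y) := by gcongr; exact ht _ (norm_inv_norm_smul_of_ne_zero hy)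
    _ = g y := by rw [← hg_smul _ (norm_nonneg y), smul_inv_smul₀ hy']

theorem isClosed_supportSet (g : E → ℝ) : IsClosed (supportSet g) := by
  simp only [supportSet, ofPred_forall]
  exact isClosed_biInter fun x _ => isClosed_le (by fun_prop) continuous_const

theorem convex_supportSet (g : E → ℝ) : Convex ℝ (supportSet g) := by
  simp only [supportSet, ofPred_forall]
  exact convex_iInter₂ fun x _ => convex_halfSpace_le
    ⟨fun s t => inner_add_left s t x, fun c t => real_inner_smul_left t x c⟩ _

end SupportFunction

section Sublinear

variable {E : Type*} [NormedAddCommGroup E] [InnerProductSpace ℝ E] [FiniteDimensional ℝ E]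
  {g : E → ℝ} (hg_smul : ∀ c : ℝ, 0 ≤ c → ∀ x, g (c • x) = c * g x)
  (hg_add : ∀ x y, g (x + y) ≤ g x + g y)
include hg_smul hg_add

theorem exists_inner_le_of_sublinear (x : E) :
    ∃ t : E, (∀ y, ⟪t, y⟫ ≤ g y) ∧ ⟪t, x⟫ = g x := by
  have hg_zero : g 0 = 0 := by simpa using hg_smul 0 le_rfl 0
  -- `c ↦ c * g x` on the line through `x` is dominated by `g`; extend it by Hahn-Banach.
  let f := LinearPMap.mkSpanSingleton' (σ := RingHom.id ℝ) x (g x) fun c hc => by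
    rcases smul_eq_zero.1 hc with rfl | rfl
    · exact zero_smul ℝ _
    · rw [hg_zero, smul_zero]
  have hdom : f.domain = ℝ ∙ x := LinearPMap.domain_mkSpanSingleton _ _ _
  have hf_le : ∀ z : f.domain, f z ≤ g z := by
    rintro ⟨z, hz⟩
    obtain ⟨c, rfl⟩ := Submodule.mem_span_singleton.1 (hdom ▸ hz)
    rw [LinearPMap.mkSpanSingleton'_apply, RingHom.id_apply, smul_eq_mul]
    rcases le_total 0 c with hc | hc
    · exact (hg_smul c hc x).ge
    · have h_neg : 0 ≤ g x + g (-x) := by simpa [hg_zero] using hg_add x (-x)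
      have h_smul : g (c • x) = -c * g (-x) := by
        rw [← hg_smul (-c) (neg_nonneg.2 hc), neg_smul_neg]
      nlinarith
  obtain ⟨G, hGf, hG⟩ := exists_extension_of_le_sublinear f g (fun c hc => hg_smul c hc.le) hg_add
    hf_le
  have hx : x ∈ f.domain := hdom ▸ Submodule.mem_span_singleton_self x
  refine ⟨(InnerProductSpace.toDual ℝ E).symm (LinearMap.toContinuousLinearMap G),
    fun y => ?_, ?_⟩
  · rw [InnerProductSpace.toDual_symm_apply]
    exact hG y
  · rw [InnerProductSpace.toDual_symm_apply, LinearMap.coe_toContinuousLinearMap', hGf ⟨x, hx⟩]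
    exact LinearPMap.mkSpanSingleton'_apply_self _ _ _ hx

theorem supportFunction_supportSet_of_sublinear (x : E) :
    supportFunction (supportSet g) x = g x := by
  obtain ⟨t, ht, htx⟩ := exists_inner_le_of_sublinear hg_smul hg_add x
  exact IsGreatest.csSup_eq ⟨⟨t, (mem_supportSet_iff_of_smul hg_smul).2 ht, htx⟩,
    forall_mem_image.2 fun s hs => (mem_supportSet_iff_of_smul hg_smul).1 hs x⟩

theorem supportSet_nonempty_of_sublinear : (supportSet g).Nonempty :=
  let ⟨t, ht, _⟩ := exists_inner_le_of_sublinear hg_smul hg_add 0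
  ⟨t, (mem_supportSet_iff_of_smul hg_smul).2 ht⟩

theorem isCompact_supportSet_of_sublinear : IsCompact (supportSet g) := by
  have hg_convex : ConvexOn ℝ univ g := ⟨convex_univ, fun x _ y _ a b ha hb _ =>
    (hg_add _ _).trans_eq (by rw [hg_smul a ha, hg_smul b hb, smul_eq_mul, smul_eq_mul])⟩
  have hg_cont : Continuous g := continuousOn_univ.1 (hg_convex.continuousOn isOpen_univ)
  obtain ⟨M, hM⟩ := (isCompact_sphere (0 : E) 1).bddAbove_image hg_cont.continuousOn
  refine Metric.isCompact_of_isClosed_isBounded (isClosed_supportSet g)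
    (isBounded_iff_forall_norm_le.2 ⟨max M 0, fun t ht => ?_⟩)
  rcases eq_or_ne t 0 with rfl | ht0
  · simp
  have hunit := norm_inv_norm_smul_of_ne_zero ht0
  calc ‖t‖ = ⟪t, ‖t‖⁻¹ • t⟫ := by
        rw [real_inner_smul_right, real_inner_self_eq_norm_sq, sq, inv_mul_cancel_left₀
          (norm_ne_zero_iff.2 ht0)]
    _ ≤ g (‖t‖⁻¹ • t) := ht _ hunit
    _ ≤ M := hM (mem_image_of_mem _ (mem_sphere_zero_iff_norm.2 hunit))
    _ ≤ max M 0 := le_max_left _ _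

end Sublinear

section SublinearExtension

variable {E : Type*} [NormedAddCommGroup E] [InnerProductSpace ℝ E] [FiniteDimensional ℝ E]

def HasSublinearExtension (h : E → ℝ) : Prop :=
  ∃ g : E → ℝ, (∀ c : ℝ, 0 ≤ c → ∀ x, g (c • x) = c * g x) ∧ (∀ x y, g (x + y) ≤ g x + g y) ∧
    ∀ x, ‖x‖ = 1 → g x = h x

namespace HasSublinearExtension

variable {h : E → ℝ} (hh : HasSublinearExtension h)
include hh

theorem supportSet_nonempty : (supportSet h).Nonempty := by
  obtain ⟨g, hg_smul, hg_add, hgh⟩ := hh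
  rw [← supportSet_congr hgh]
  exact supportSet_nonempty_of_sublinear hg_smul hg_add

theorem isCompact_supportSet : IsCompact (supportSet h) := by
  obtain ⟨g, hg_smul, hg_add, hgh⟩ := hh
  rw [← supportSet_congr hgh]
  exact isCompact_supportSet_of_sublinear hg_smul hg_add

theorem supportFunction_supportSet {x : E} (hx : ‖x‖ = 1) :
    supportFunction (supportSet h) x = h x := by
  obtain ⟨g, hg_smul, hg_add, hgh⟩ := hh
  rw [← supportSet_congr hgh, supportFunction_supportSet_of_sublinear hg_smul hg_add, hgh x hx]

end HasSublinearExtension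

theorem supportSet_supportFunction {K : Set E} (hK : IsCompact K) (hconv : Convex ℝ K)
    (hne : K.Nonempty) : supportSet (supportFunction K) = K := by
  refine Subset.antisymm (fun t ht => ?_) fun t ht x _ => le_supportFunction hK ht x
  by_contra htK
  obtain ⟨f, c, hfK, hft⟩ := geometric_hahn_banach_closed_point hconv hK.isClosed htK
  set y := (InnerProductSpace.toDual ℝ E).symm f
  have hy : ∀ z, ⟪z, y⟫ = f z := fun z => by
    rw [real_inner_comm, InnerProductSpace.toDual_symm_apply]
  have hy0 : y ≠ 0 := by
    rintro hy0
    obtain ⟨a, ha⟩ := hne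
    have := (hfK a ha).trans hft
    rw [← hy, ← hy, hy0, inner_zero_right, inner_zero_right] at this
    exact lt_irrefl 0 this
  have hsep : supportFunction K y < ⟪t, y⟫ :=
    (supportFunction_le hne fun a ha => (hy a ▸ hfK a ha).le).trans_lt (hy t ▸ hft)
  have hunit := ht _ (norm_inv_norm_smul_of_ne_zero hy0)
  rw [supportFunction_smul K (inv_nonneg.2 (norm_nonneg y)), real_inner_smul_right] at hunit
  exact absurd hunit (not_le.2 (mul_lt_mul_of_pos_left hsep (by positivity)))

end SublinearExtension

section OneSidedLimits

variable {α β : Type*} [LinearOrder α] [TopologicalSpace α] [OrderTopology α]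
  [LinearOrder β] [TopologicalSpace β] [OrderTopology β] {f : α → β} {a b : α}

theorem AntitoneOn.tendsto_nhdsLT_of_forall_gt (hf : AntitoneOn f (Icc a b)) (hab : a < b)
    (h : ∀ c, f b < c → ∃ x ∈ Ioo a b, f x < c) : Tendsto f (𝓝[<] b) (𝓝 (f b)) := by
  refine tendsto_order.2 ⟨fun c hc => ?_, fun c hc => ?_⟩
  · filter_upwards [Ioo_mem_nhdsLT hab] with y hy
    exact hc.trans_le (hf ⟨hy.1.le, hy.2.le⟩ (right_mem_Icc.2 hab.le) hy.2.le)
  · obtain ⟨x, hx, hxc⟩ := h c hc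
    filter_upwards [Ioo_mem_nhdsLT hx.2] with y hy
    exact (hf ⟨hx.1.le, hx.2.le⟩ ⟨hx.1.le.trans hy.1.le, hy.2.le⟩ hy.1.le).trans_lt hxc

theorem AntitoneOn.tendsto_nhdsGT_of_forall_lt (hf : AntitoneOn f (Icc a b)) (hab : a < b)
    (h : ∀ c < f a, ∃ x ∈ Ioc a b, c < f x) : Tendsto f (𝓝[>] a) (𝓝 (f a)) := by
  refine tendsto_order.2 ⟨fun c hc => ?_, fun c hc => ?_⟩
  · obtain ⟨x, hx, hcx⟩ := h c hc
    filter_upwards [Ioo_mem_nhdsGT hx.1] with y hy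
    exact hcx.trans_le (hf ⟨hy.1.le, hy.2.le.trans hx.2⟩ ⟨hx.1.le, hx.2⟩ hy.2.le)
  · filter_upwards [Ioo_mem_nhdsGT hab] with y hy
    exact (hf (left_mem_Icc.2 hab.le) ⟨hy.1.le, hy.2.le⟩ hy.1.le).trans_lt hc

end OneSidedLimits

section FuzzyVector

variable {n : ℕ} {u : EuclideanSpace ℝ (Fin n) → ℝ} {α : ℝ}

theorem levelSet_zero : levelSet u 0 = closure {t | 0 < u t} := if_pos rfl

theorem levelSet_of_ne_zero (hα : α ≠ 0) : levelSet u α = {t | α ≤ u t} := if_neg hα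

theorem fuzzySupp_eq_supportFunction : fuzzySupp u α = supportFunction (levelSet u α) := rfl

theorem levelSet_antitoneOn : AntitoneOn (levelSet u) (Ici 0) := by
  intro α hα β _ hαβ
  rcases eq_or_lt_of_le (mem_Ici.1 hα) with rfl | hα0
  · rcases eq_or_lt_of_le hαβ with rfl | hβ
    · exact le_rfl
    · rw [levelSet_zero, levelSet_of_ne_zero hβ.ne']
      exact fun t ht => subset_closure (hβ.trans_le ht)
  · rw [levelSet_of_ne_zero hα0.ne', levelSet_of_ne_zero (hα0.trans_le hαβ).ne']
    exact fun t ht => hαβ.trans ht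

theorem mem_levelSet_of_forall_lt (hα : 0 < α) {t : EuclideanSpace ℝ (Fin n)}
    (ht : ∀ β ∈ Ioo 0 α, t ∈ levelSet u β) : t ∈ levelSet u α := by
  rw [levelSet_of_ne_zero hα.ne', mem_ofPred_eq]
  refine le_of_forall_lt_imp_le_of_dense fun c hc => ?_
  have hβ : max c (α / 2) ∈ Ioo 0 α := ⟨lt_max_of_lt_right (half_pos hα),
    max_lt hc (half_lt_self hα)⟩
  have := ht _ hβ
  rw [levelSet_of_ne_zero hβ.1.ne'] at this
  exact (le_max_left _ _).trans this

namespace IsFuzzyVector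

variable (hu : IsFuzzyVector u)
include hu

theorem isClosed_levelSet (α : ℝ) : IsClosed (levelSet u α) := by
  rcases eq_or_ne α 0 with rfl | hα
  · rw [levelSet_zero]
    exact isClosed_closure
  · rw [levelSet_of_ne_zero hα]
    exact hu.2.2.2.2 α

theorem isCompact_levelSet (hα : 0 ≤ α) : IsCompact (levelSet u α) := by
  have h0 : IsCompact (levelSet u 0) := levelSet_zero (u := u) ▸ hu.2.2.1
  exact h0.of_isClosed_subset (hu.isClosed_levelSet α) (levelSet_antitoneOn self_mem_Ici hα hα)

theorem levelSet_nonempty (hα : α ≤ 1) : (levelSet u α).Nonempty := by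
  obtain ⟨t, ht⟩ := hu.2.1
  rcases eq_or_ne α 0 with rfl | hα0
  · rw [levelSet_zero]
    exact ⟨t, subset_closure (show 0 < u t by rw [ht]; exact one_pos)⟩
  · rw [levelSet_of_ne_zero hα0]
    exact ⟨t, hα.trans ht.ge⟩

theorem convex_levelSet (α : ℝ) : Convex ℝ (levelSet u α) := by
  have hqc : ∀ s t, ∀ a b : ℝ, 0 ≤ a → 0 ≤ b → a + b = 1 →
      min (u s) (u t) ≤ u (a • s + b • t) := by
    intro s t a b ha _ hab
    obtain rfl := eq_sub_of_add_eq' hab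
    exact hu.2.2.2.1 s t a ⟨ha, by linarith⟩
  rcases eq_or_ne α 0 with rfl | hα
  · rw [levelSet_zero]
    exact Convex.closure fun s hs t ht a b ha hb hab =>
      (lt_min hs ht).trans_le (hqc s t a b ha hb hab)
  · rw [levelSet_of_ne_zero hα]
    exact fun s hs t ht a b ha hb hab => (le_min hs ht).trans (hqc s t a b ha hb hab)

theorem fuzzySupp_antitoneOn (x : EuclideanSpace ℝ (Fin n)) :
    AntitoneOn (fun α => fuzzySupp u α x) (Icc 0 1) :=
  fun _ hα _ hβ hαβ => supportFunction_mono (hu.isCompact_levelSet hα.1)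
    (hu.levelSet_nonempty hβ.2) (levelSet_antitoneOn hα.1 (hα.1.trans hαβ) hαβ) x

theorem fuzzySupp_add_le (hα : α ∈ Icc 0 1) (x y : EuclideanSpace ℝ (Fin n)) :
    fuzzySupp u α (x + y) ≤ fuzzySupp u α x + fuzzySupp u α y :=
  supportFunction_add_le (hu.isCompact_levelSet hα.1) (hu.levelSet_nonempty hα.2) x y

theorem tendsto_fuzzySupp_nhdsLT (hα : α ∈ Ioc 0 1) (x : EuclideanSpace ℝ (Fin n)) :
    Tendsto (fun β => fuzzySupp u β x) (𝓝[<] α) (𝓝 (fuzzySupp u α x)) := by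
  refine ((hu.fuzzySupp_antitoneOn x).mono (Icc_subset_Icc_right hα.2)).tendsto_nhdsLT_of_forall_gt
    hα.1 fun c hc => ?_
  have : Nonempty (Ioo 0 α) := ⟨⟨α / 2, half_pos hα.1, half_lt_self hα.1⟩⟩
  -- The level sets below `α` decrease to `levelSet u α`, which lies in the open half-space
  -- `{⟪·, x⟫ < c}`; by compactness one of them already does.
  obtain ⟨⟨β, hβ⟩, hβc⟩ := exists_subset_nhds_of_isCompact' (V := fun β : Ioo 0 α => levelSet u β)
    (U := {t | ⟪t, x⟫ < c})
    (directed_of_isDirected_le fun β₁ β₂ h => levelSet_antitoneOn β₁.2.1.le β₂.2.1.le h)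
    (fun β => hu.isCompact_levelSet β.2.1.le) (fun β => hu.isClosed_levelSet β)
    fun t ht => (isOpen_lt (by fun_prop) continuous_const).mem_nhds
      ((le_supportFunction (hu.isCompact_levelSet hα.1.le)
        (mem_levelSet_of_forall_lt hα.1 fun β hβ => mem_iInter.1 ht ⟨β, hβ⟩) x).trans_lt hc)
  exact ⟨β, hβ, ((hu.isCompact_levelSet hβ.1.le).supportFunction_lt_iff
    (hu.levelSet_nonempty (hβ.2.le.trans hα.2)) x c).2 hβc⟩

theorem tendsto_fuzzySupp_nhdsGT_zero (x : EuclideanSpace ℝ (Fin n)) :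
    Tendsto (fun β => fuzzySupp u β x) (𝓝[>] 0) (𝓝 (fuzzySupp u 0 x)) := by
  refine (hu.fuzzySupp_antitoneOn x).tendsto_nhdsGT_of_forall_lt zero_lt_one fun c hc => ?_
  have hpos : {t | 0 < u t}.Nonempty :=
    let ⟨t, ht⟩ := hu.2.1
    ⟨t, show 0 < u t by rw [ht]; exact one_pos⟩
  rw [fuzzySupp_eq_supportFunction, levelSet_zero, supportFunction_closure hu.2.2.1 hpos] at hc
  obtain ⟨_, ⟨s, hs : 0 < u s, rfl⟩, hcs⟩ := exists_lt_of_lt_csSup (hpos.image _) hc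
  have hs_mem : s ∈ levelSet u (u s) := by
    rw [levelSet_of_ne_zero hs.ne']
    exact le_refl (u s)
  exact ⟨u s, ⟨hs, (hu.1 s).2⟩, hcs.trans_le (le_supportFunction (hu.isCompact_levelSet hs.le)
    hs_mem x)⟩

theorem levelSet_eq_supportSet (hα : α ∈ Icc 0 1) :
    levelSet u α = supportSet (fuzzySupp u α) :=
  (supportSet_supportFunction (hu.isCompact_levelSet hα.1) (hu.convex_levelSet α)
    (hu.levelSet_nonempty hα.2)).symm

end IsFuzzyVector

end FuzzyVector

section FuzzyOfLevels

variable {X : Type*} {K : ℝ → Set X} {α : ℝ}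

-- `sSup ∅ = 0` is the intended value at points outside every `K α`.
def fuzzyOfLevels (K : ℝ → Set X) (t : X) : ℝ :=
  sSup {α | α ∈ Icc (0 : ℝ) 1 ∧ t ∈ K α}

theorem fuzzyOfLevels_nonneg (t : X) : 0 ≤ fuzzyOfLevels K t :=
  Real.sSup_nonneg fun _ hα => hα.1.1

theorem fuzzyOfLevels_le_one (t : X) : fuzzyOfLevels K t ≤ 1 :=
  Real.sSup_le (fun _ hα => hα.1.2) zero_le_one

theorem fuzzyOfLevels_congr {K' : ℝ → Set X} (h : ∀ α ∈ Icc (0 : ℝ) 1, K α = K' α) :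
    fuzzyOfLevels K = fuzzyOfLevels K' := by
  funext t
  unfold fuzzyOfLevels
  congr 1
  ext α
  exact and_congr_right fun hα => by rw [h α hα]

theorem le_fuzzyOfLevels {t : X} (hα : α ∈ Icc 0 1) (ht : t ∈ K α) : α ≤ fuzzyOfLevels K t :=
  le_csSup ⟨1, fun _ hβ => hβ.1.2⟩ ⟨hα, ht⟩

theorem mem_of_lt_fuzzyOfLevels (hanti : AntitoneOn K (Icc 0 1)) {t : X} (hα : 0 ≤ α)
    (h : α < fuzzyOfLevels K t) : t ∈ K α := by
  have hne : {α | α ∈ Icc (0 : ℝ) 1 ∧ t ∈ K α}.Nonempty := by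
    refine nonempty_iff_ne_empty.2 fun he => ?_
    rw [fuzzyOfLevels, he, Real.sSup_empty] at h
    exact h.not_ge hα
  obtain ⟨β, ⟨hβ, htβ⟩, hαβ⟩ := exists_lt_of_lt_csSup hne h
  exact hanti ⟨hα, hαβ.le.trans hβ.2⟩ hβ hαβ.le htβ

theorem le_fuzzyOfLevels_iff (hanti : AntitoneOn K (Icc 0 1))
    (hleft : ∀ α ∈ Ioc (0 : ℝ) 1, ∀ t, (∀ β ∈ Ioo 0 α, t ∈ K β) → t ∈ K α)
    (hα : α ∈ Ioc 0 1) (t : X) : α ≤ fuzzyOfLevels K t ↔ t ∈ K α :=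
  ⟨fun h => hleft α hα t fun _ hβ => mem_of_lt_fuzzyOfLevels hanti hβ.1.le (hβ.2.trans_le h),
    le_fuzzyOfLevels (Ioc_subset_Icc_self hα)⟩

end FuzzyOfLevels

section FuzzyVectorOfLevels

variable {n : ℕ} {K : ℝ → Set (EuclideanSpace ℝ (Fin n))} {α : ℝ}

theorem levelSet_fuzzyOfLevels (hanti : AntitoneOn K (Icc 0 1))
    (hleft : ∀ α ∈ Ioc (0 : ℝ) 1, ∀ t, (∀ β ∈ Ioo 0 α, t ∈ K β) → t ∈ K α)
    (hα : α ∈ Ioc 0 1) : levelSet (fuzzyOfLevels K) α = K α := by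
  rw [levelSet_of_ne_zero hα.1.ne']
  exact ext fun t => le_fuzzyOfLevels_iff hanti hleft hα t

theorem isFuzzyVector_fuzzyOfLevels (hanti : AntitoneOn K (Icc 0 1))
    (hleft : ∀ α ∈ Ioc (0 : ℝ) 1, ∀ t, (∀ β ∈ Ioo 0 α, t ∈ K β) → t ∈ K α)
    (hne : (K 1).Nonempty) (hK₀ : IsCompact (K 0)) (hclosed : ∀ α ∈ Ioc (0 : ℝ) 1, IsClosed (K α))
    (hconv : ∀ α ∈ Ioc (0 : ℝ) 1, Convex ℝ (K α)) : IsFuzzyVector (fuzzyOfLevels K) := by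
  have hle : ∀ {α}, α ∈ Ioc (0 : ℝ) 1 → ∀ t, α ≤ fuzzyOfLevels K t ↔ t ∈ K α :=
    fun hα t => le_fuzzyOfLevels_iff hanti hleft hα t
  refine ⟨fun t => ⟨fuzzyOfLevels_nonneg t, fuzzyOfLevels_le_one t⟩, ?_, ?_, ?_, fun α => ?_⟩
  · obtain ⟨t, ht⟩ := hne
    exact ⟨t, (fuzzyOfLevels_le_one t).antisymm ((hle (right_mem_Ioc.2 one_pos) t).2 ht)⟩
  · exact hK₀.of_isClosed_subset isClosed_closure
      (closure_minimal (fun t ht => mem_of_lt_fuzzyOfLevels hanti le_rfl ht) hK₀.isClosed)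
  · intro s t c hc
    set m := min (fuzzyOfLevels K s) (fuzzyOfLevels K t)
    rcases le_or_gt m 0 with hm | hm
    · exact hm.trans (fuzzyOfLevels_nonneg _)
    have hmI : m ∈ Ioc 0 1 := ⟨hm, (min_le_left _ _).trans (fuzzyOfLevels_le_one s)⟩
    exact (hle hmI _).2 (hconv m hmI ((hle hmI s).1 (min_le_left _ _))
      ((hle hmI t).1 (min_le_right _ _)) hc.1 (sub_nonneg.2 hc.2) (add_sub_cancel _ _))
  · rcases le_or_gt α 0 with hα | hα
    · have huniv : {t | α ≤ fuzzyOfLevels K t} = univ :=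
        eq_univ_of_forall fun t => hα.trans (fuzzyOfLevels_nonneg t)
      exact huniv ▸ isClosed_univ
    rcases le_or_gt α 1 with hα1 | hα1
    · exact (ext fun t => hle ⟨hα, hα1⟩ t : {t | α ≤ fuzzyOfLevels K t} = K α) ▸
        hclosed α ⟨hα, hα1⟩
    · have hempty : {t | α ≤ fuzzyOfLevels K t} = ∅ :=
        eq_empty_of_forall_notMem fun t ht => (fuzzyOfLevels_le_one t).not_gt (hα1.trans_le ht)
      exact hempty ▸ isClosed_empty

namespace IsFuzzyVector

variable {u : EuclideanSpace ℝ (Fin n) → ℝ} (hu : IsFuzzyVector u)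
include hu

theorem fuzzyOfLevels_levelSet : fuzzyOfLevels (levelSet u) = u := by
  funext t
  refine le_antisymm (Real.sSup_le (fun α ⟨hα, ht⟩ => ?_) (hu.1 t).1) ?_
  · rcases eq_or_lt_of_le hα.1 with rfl | hα0
    · exact (hu.1 t).1
    · rw [levelSet_of_ne_zero hα0.ne'] at ht
      exact ht
  · rcases eq_or_lt_of_le (hu.1 t).1 with h0 | h0
    · exact h0 ▸ fuzzyOfLevels_nonneg t
    · refine le_fuzzyOfLevels (hu.1 t) ?_
      rw [levelSet_of_ne_zero h0.ne']
      exact le_refl (u t)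

theorem eq_fuzzyOfLevels_supportSet {h : ℝ → EuclideanSpace ℝ (Fin n) → ℝ}
    (hsupp : ∀ α ∈ Icc (0 : ℝ) 1, ∀ x, ‖x‖ = 1 → fuzzySupp u α x = h α x) :
    u = fuzzyOfLevels fun α => supportSet (h α) :=
  calc u = fuzzyOfLevels (levelSet u) := hu.fuzzyOfLevels_levelSet.symm
    _ = _ := fuzzyOfLevels_congr fun α hα =>
      (hu.levelSet_eq_supportSet hα).trans (supportSet_congr (hsupp α hα))

end IsFuzzyVector

end FuzzyVectorOfLevels

section SupportFunctionFamily

variable {n : ℕ} {h : ℝ → EuclideanSpace ℝ (Fin n) → ℝ}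

theorem antitoneOn_supportSet
    (hmono : ∀ x : EuclideanSpace ℝ (Fin n), ‖x‖ = 1 → ∀ α β : ℝ, α ∈ Icc (0 : ℝ) 1 →
      β ∈ Icc (0 : ℝ) 1 → α ≤ β → h β x ≤ h α x) :
    AntitoneOn (fun α => supportSet (h α)) (Icc 0 1) :=
  fun α hα β hβ hαβ => supportSet_mono fun x hx => hmono x hx α β hα hβ hαβ

theorem mem_supportSet_of_forall_lt
    (hleft : ∀ x : EuclideanSpace ℝ (Fin n), ‖x‖ = 1 → ∀ α₀ ∈ Ioc (0 : ℝ) 1,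
      Tendsto (fun α => h α x) (𝓝[<] α₀) (𝓝 (h α₀ x)))
    (α : ℝ) (hα : α ∈ Ioc (0 : ℝ) 1) (t : EuclideanSpace ℝ (Fin n))
    (ht : ∀ β ∈ Ioo 0 α, t ∈ supportSet (h β)) : t ∈ supportSet (h α) :=
  fun x hx => ge_of_tendsto (hleft x hx α hα) <| by
    filter_upwards [Ioo_mem_nhdsLT hα.1] with β hβ using ht β hβ x hx

variable (hVS1 : ∀ α ∈ Icc (0 : ℝ) 1, HasSublinearExtension (h α))
  (hmono : ∀ x : EuclideanSpace ℝ (Fin n), ‖x‖ = 1 → ∀ α β : ℝ, α ∈ Icc (0 : ℝ) 1 →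
    β ∈ Icc (0 : ℝ) 1 → α ≤ β → h β x ≤ h α x)
  (hleft : ∀ x : EuclideanSpace ℝ (Fin n), ‖x‖ = 1 → ∀ α₀ ∈ Ioc (0 : ℝ) 1,
    Tendsto (fun α => h α x) (𝓝[<] α₀) (𝓝 (h α₀ x)))
include hVS1 hmono hleft

theorem isFuzzyVector_fuzzyOfLevels_supportSet :
    IsFuzzyVector (fuzzyOfLevels fun α => supportSet (h α)) :=
  isFuzzyVector_fuzzyOfLevels (antitoneOn_supportSet hmono) (mem_supportSet_of_forall_lt hleft)
    (hVS1 1 (right_mem_Icc.2 zero_le_one)).supportSet_nonempty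
    (hVS1 0 (left_mem_Icc.2 zero_le_one)).isCompact_supportSet
    (fun α _ => isClosed_supportSet (h α)) fun α _ => convex_supportSet (h α)

theorem fuzzySupp_fuzzyOfLevels_supportSet
    (hright : ∀ x : EuclideanSpace ℝ (Fin n), ‖x‖ = 1 →
      Tendsto (fun α => h α x) (𝓝[>] 0) (𝓝 (h 0 x)))
    (α : ℝ) (hα : α ∈ Icc (0 : ℝ) 1) (x : EuclideanSpace ℝ (Fin n)) (hx : ‖x‖ = 1) :
    fuzzySupp (fuzzyOfLevels fun α => supportSet (h α)) α x = h α x := by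
  have hpos : ∀ β ∈ Ioc (0 : ℝ) 1,
      fuzzySupp (fuzzyOfLevels fun α => supportSet (h α)) β x = h β x := fun β hβ => by
    rw [fuzzySupp_eq_supportFunction, levelSet_fuzzyOfLevels (antitoneOn_supportSet hmono)
      (mem_supportSet_of_forall_lt hleft) hβ,
      (hVS1 β (Ioc_subset_Icc_self hβ)).supportFunction_supportSet hx]
  rcases eq_or_lt_of_le hα.1 with rfl | hα0
  · -- both sides are right limits at `0` of functions that agree on `(0, 1]`
    refine tendsto_nhds_unique
      ((isFuzzyVector_fuzzyOfLevels_supportSet hVS1 hmono hleft).tendsto_fuzzySupp_nhdsGT_zero x)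
      ((hright x hx).congr' ?_)
    filter_upwards [Ioc_mem_nhdsGT zero_lt_one] with β hβ using (hpos β hβ).symm
  · exact hpos α ⟨hα0, hα.2⟩

end SupportFunctionFamily

theorem stmt12 {n : ℕ} (h : ℝ → EuclideanSpace ℝ (Fin n) → ℝ) :
    (((∀ α ∈ Set.Icc (0:ℝ) 1, ∃ g : EuclideanSpace ℝ (Fin n) → ℝ,
        (∀ lam : ℝ, 0 ≤ lam → ∀ x, g (lam • x) = lam * g x) ∧
        (∀ x y, g (x + y) ≤ g x + g y) ∧
        (∀ x, ‖x‖ = 1 → g x = h α x)) ∧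
      (∀ x : EuclideanSpace ℝ (Fin n), ‖x‖ = 1 →
        (∀ α β : ℝ, α ∈ Set.Icc (0:ℝ) 1 → β ∈ Set.Icc (0:ℝ) 1 → α ≤ β →
            h β x ≤ h α x) ∧
        (∀ α₀ ∈ Set.Ioc (0:ℝ) 1,
            Filter.Tendsto (fun α => h α x) (nhdsWithin α₀ (Set.Iio α₀))
              (nhds (h α₀ x))) ∧
        Filter.Tendsto (fun α => h α x) (nhdsWithin 0 (Set.Ioi 0)) (nhds (h 0 x)))) ↔
      (∃! u : EuclideanSpace ℝ (Fin n) → ℝ, IsFuzzyVector u ∧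
        ∀ α ∈ Set.Icc (0:ℝ) 1, ∀ x : EuclideanSpace ℝ (Fin n), ‖x‖ = 1 →
          fuzzySupp u α x = h α x)) ∧
    (∀ u : EuclideanSpace ℝ (Fin n) → ℝ, IsFuzzyVector u →
      (∀ α ∈ Set.Icc (0:ℝ) 1, ∀ x : EuclideanSpace ℝ (Fin n), ‖x‖ = 1 →
          fuzzySupp u α x = h α x) →
      ∀ t, u t = sSup {α : ℝ | α ∈ Set.Icc (0:ℝ) 1 ∧
        ∀ x : EuclideanSpace ℝ (Fin n), ‖x‖ = 1 → ⟪t, x⟫ ≤ h α x}) := by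
  refine ⟨⟨fun ⟨hVS1, hVS2⟩ => ?_, fun ⟨u, ⟨hu, hsupp⟩, _⟩ => ?_⟩,
    fun u hu hsupp t => congrFun (hu.eq_fuzzyOfLevels_supportSet hsupp) t⟩
  · have hmono := fun x hx => (hVS2 x hx).1
    have hleft := fun x hx => (hVS2 x hx).2.1
    exact ⟨_, ⟨isFuzzyVector_fuzzyOfLevels_supportSet hVS1 hmono hleft,
      fuzzySupp_fuzzyOfLevels_supportSet hVS1 hmono hleft fun x hx => (hVS2 x hx).2.2⟩,
      fun u ⟨hu, hsupp⟩ => hu.eq_fuzzyOfLevels_supportSet hsupp⟩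
  refine ⟨fun α hα => ⟨fuzzySupp u α, fun c hc x => supportFunction_smul _ hc x,
    hu.fuzzySupp_add_le hα, hsupp α hα⟩,
    fun x hx => ⟨fun α β hα hβ hαβ => ?_, fun α₀ hα₀ => ?_, ?_⟩⟩
  · rw [← hsupp α hα x hx, ← hsupp β hβ x hx]
    exact hu.fuzzySupp_antitoneOn x hα hβ hαβ
  · rw [← hsupp α₀ (Ioc_subset_Icc_self hα₀) x hx]
    refine (hu.tendsto_fuzzySupp_nhdsLT hα₀ x).congr' ?_
    filter_upwards [Ioo_mem_nhdsLT hα₀.1] with β hβ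
    exact hsupp β ⟨hβ.1.le, hβ.2.le.trans hα₀.2⟩ x hx
  · rw [← hsupp 0 (left_mem_Icc.2 zero_le_one) x hx]
    refine (hu.tendsto_fuzzySupp_nhdsGT_zero x).congr' ?_
    filter_upwards [Ioc_mem_nhdsGT zero_lt_one] with β hβ
    exact hsupp β (Ioc_subset_Icc_self hβ) x hx
end
end

section
/- Every nonempty compact convex set A ⊆ ℝⁿ can be written uniquely as A = B + B_λ where B is an irreducible convex body (one with no non-trivial regular inner parallel body) and B_λ is a closed ball of some radius λ ≥ 0 centered at the origin; explicitly B = A_{−λ_A} and λ = λ_A = sup{μ ≥ 0 : A = A_{−μ} + B_μ}. -/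
open scoped RealInnerProductSpace Pointwise

noncomputable section

/-- The support function of a subset of ℝⁿ. -/
def suppFn {n : ℕ} (A : Set (EuclideanSpace ℝ (Fin n)))
    (x : EuclideanSpace ℝ (Fin n)) : ℝ :=
  sSup ((fun a => ⟪a, x⟫) '' A)

/-- The inner parallel body of `A` at distance `lam`:
`A₋λ = {t | t + B_λ ⊆ A}`. -/
def innerParallel {n : ℕ} (A : Set (EuclideanSpace ℝ (Fin n))) (lam : ℝ) :
    Set (EuclideanSpace ℝ (Fin n)) :=
  {t | ∀ b ∈ Metric.closedBall (0 : EuclideanSpace ℝ (Fin n)) lam, t + b ∈ A}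

/-- The set of distances at which `A` has a regular inner parallel body. -/
def regSet {n : ℕ} (A : Set (EuclideanSpace ℝ (Fin n))) : Set ℝ :=
  {lam | 0 ≤ lam ∧ A = innerParallel A lam + Metric.closedBall 0 lam}

/-- A convex body is irreducible if it has no non-trivial regular inner
parallel body. -/
def IrredBody {n : ℕ} (B : Set (EuclideanSpace ℝ (Fin n))) : Prop :=
  ∀ lam : ℝ, 0 ≤ lam →
    B = innerParallel B lam + Metric.closedBall 0 lam → lam = 0

/-!
For compact `A` the set of regular radii is bounded (a ball of radius `λ` inside `A` forces
`2λ ≤ diam A`) and closed (inner parallel bodies pass to limits), so it has a largest element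
`λ_A`. Since `(A₋λ)₋μ = A₋(λ+μ)`, a non-trivial regular inner parallel body of `A₋λ_A` would give a
regular radius beyond `λ_A`; hence `A₋λ_A` is irreducible. Uniqueness rests on Rådström's
cancellation law for closed convex sets, `X + C ⊆ Y + C ⟹ X ⊆ Y`: from `A = B + B_λ` it gives
`B = A₋λ`, so `λ ≤ λ_A`, and then `B + B_λ = B₋μ + B_μ + B_λ` with `μ = λ_A - λ` gives
`B = B₋μ + B_μ`, whence `μ = 0` by irreducibility of `B`.
-/

open Set Metric Bornology Filter Topology

section Cancellation

variable {E : Type*} [NormedAddCommGroup E] [NormedSpace ℝ E] {X Y C : Set E} {x : E}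

theorem Convex.exists_natCast_smul_add_sub_mem (hY : Convex ℝ Y)
    (hx : ∀ c ∈ C, x + c ∈ Y + C) {c₀ : E} (hc₀ : c₀ ∈ C) (m : ℕ) :
    ∃ c ∈ C, (m : ℝ) • x + (c₀ - c) ∈ (m : ℝ) • Y := by
  induction m with
  | zero =>
    obtain ⟨y, hy, -, -, -⟩ := hx c₀ hc₀
    exact ⟨c₀, hc₀, by simp [zero_smul_set ⟨y, hy⟩]⟩
  | succ m ih =>
    obtain ⟨c, hc, hmem⟩ := ih
    obtain ⟨y, hy, c', hc', hyc'⟩ := hx c hc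
    refine ⟨c', hc', ?_⟩
    rw [Nat.cast_succ, hY.add_smul m.cast_nonneg zero_le_one, one_smul]
    convert add_mem_add hmem hy using 1
    rw [add_smul, one_smul, eq_sub_of_add_eq hyc']
    abel

/-- Rådström's cancellation law: `x + m⁻¹ • (c₀ - c) ∈ Y` for every `m`, and the error term
is `O(1/m)` because `C` is bounded. -/
theorem Convex.mem_of_add_mem_add (hY : Convex ℝ Y) (hYc : IsClosed Y) (hC : C.Nonempty)
    (hCb : IsBounded C) (hx : ∀ c ∈ C, x + c ∈ Y + C) : x ∈ Y := by
  obtain ⟨c₀, hc₀⟩ := hC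
  obtain ⟨R, hR⟩ := hCb.subset_closedBall 0
  rw [← hYc.closure_eq, Metric.mem_closure_iff]
  intro ε hε
  obtain ⟨m, hm⟩ := exists_nat_gt (2 * R / ε)
  have hR0 : 0 ≤ R := by simpa using dist_nonneg.trans (hR hc₀)
  have hm0 : (0 : ℝ) < m := lt_of_le_of_lt (by positivity) hm
  obtain ⟨c, hc, hmem⟩ := hY.exists_natCast_smul_add_sub_mem hx hc₀ m
  rw [mem_smul_set_iff_inv_smul_mem₀ hm0.ne', smul_add, inv_smul_smul₀ hm0.ne'] at hmem
  refine ⟨_, hmem, ?_⟩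
  have hdiff : ‖c₀ - c‖ ≤ 2 * R := (norm_sub_le c₀ c).trans <| by
    linarith [mem_closedBall_zero_iff.mp (hR hc₀), mem_closedBall_zero_iff.mp (hR hc)]
  calc dist x (x + (m : ℝ)⁻¹ • (c₀ - c)) = (m : ℝ)⁻¹ * ‖c₀ - c‖ := by
        rw [dist_eq_norm, sub_add_cancel_left, norm_neg, norm_smul, norm_inv,
          RCLike.norm_natCast]
    _ ≤ (m : ℝ)⁻¹ * (2 * R) := by gcongr
    _ < ε := by
        rw [inv_mul_lt_iff₀ hm0]
        linarith [(div_lt_iff₀ hε).mp hm]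

theorem Convex.subset_of_add_subset_add (hY : Convex ℝ Y) (hYc : IsClosed Y) (hC : C.Nonempty)
    (hCb : IsBounded C) (h : X + C ⊆ Y + C) : X ⊆ Y := fun _ hx =>
  hY.mem_of_add_mem_add hYc hC hCb fun _ hc => h (add_mem_add hx hc)

end Cancellation

section InnerParallel

variable {n : ℕ} {A B : Set (EuclideanSpace ℝ (Fin n))} {r s : ℝ}

theorem innerParallel_add_closedBall_subset (A : Set (EuclideanSpace ℝ (Fin n))) (r : ℝ) :
    innerParallel A r + closedBall 0 r ⊆ A := by
  rintro _ ⟨t, ht, b, hb, rfl⟩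
  exact ht b hb

theorem innerParallel_subset (hr : 0 ≤ r) : innerParallel A r ⊆ A := fun t ht => by
  simpa using ht 0 (mem_closedBall_self hr)

theorem isClosed_innerParallel (hA : IsClosed A) (r : ℝ) : IsClosed (innerParallel A r) := by
  have : innerParallel A r = ⋂ b ∈ closedBall (0 : EuclideanSpace ℝ (Fin n)) r, (· + b) ⁻¹' A := by
    ext t; simp [innerParallel]
  rw [this]
  exact isClosed_biInter fun b _ => hA.preimage (continuous_add_const b)

theorem IsCompact.innerParallel (hA : IsCompact A) (hr : 0 ≤ r) :
    IsCompact (innerParallel A r) :=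
  hA.of_isClosed_subset (isClosed_innerParallel hA.isClosed r) (innerParallel_subset hr)

theorem Convex.innerParallel (hA : Convex ℝ A) (r : ℝ) : Convex ℝ (innerParallel A r) := by
  intro t₁ h₁ t₂ h₂ a b ha hb hab c hc
  convert hA (h₁ c hc) (h₂ c hc) ha hb hab using 1
  rw [smul_add, smul_add, add_add_add_comm, ← add_smul, hab, one_smul]

theorem innerParallel_innerParallel (hr : 0 ≤ r) (hs : 0 ≤ s) :
    innerParallel (innerParallel A r) s = innerParallel A (r + s) := by
  have hball : closedBall (0 : EuclideanSpace ℝ (Fin n)) r + closedBall 0 s =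
      closedBall 0 (r + s) := by
    rw [closedBall_add_closedBall hr hs, add_zero]
  ext t
  constructor
  · intro h c hc
    rw [← hball] at hc
    obtain ⟨a, ha, b, hb, rfl⟩ := hc
    simpa [add_comm a b, add_assoc] using h b hb a ha
  · intro h b hb a ha
    simpa [add_comm a b, add_assoc] using h (a + b) (hball ▸ add_mem_add ha hb)

theorem innerParallel_add_closedBall (hB : Convex ℝ B) (hBc : IsClosed B) (hr : 0 ≤ r) :
    innerParallel (B + closedBall 0 r) r = B :=
  Subset.antisymm
    (fun _ ht => hB.mem_of_add_mem_add hBc (nonempty_closedBall.mpr hr) isBounded_closedBall ht)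
    (fun _ ht _ hb => add_mem_add ht hb)

theorem mem_innerParallel_of_tendsto {ι : Type*} {l : Filter ι} [l.NeBot] (hA : IsClosed A)
    {u : ι → ℝ} {t : ι → EuclideanSpace ℝ (Fin n)} {t₀ : EuclideanSpace ℝ (Fin n)}
    (hu₀ : ∀ i, 0 ≤ u i) (hu : Tendsto u l (𝓝 s)) (ht : Tendsto t l (𝓝 t₀))
    (hmem : ∀ i, t i ∈ innerParallel A (u i)) : t₀ ∈ innerParallel A s := by
  intro c hc
  rcases (ge_of_tendsto' hu hu₀).eq_or_lt with rfl | hs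
  · rw [closedBall_zero, mem_singleton_iff] at hc
    rw [hc, add_zero]
    exact hA.mem_of_tendsto ht (Eventually.of_forall fun i => innerParallel_subset (hu₀ i) (hmem i))
  · -- `(u i / s) • c` lies in the ball of radius `u i` and tends to `c`.
    have hlim : Tendsto (fun i => t i + (u i / s) • c) l (𝓝 (t₀ + c)) := by
      simpa [div_self hs.ne'] using ht.add ((hu.div_const s).smul_const c)
    refine hA.mem_of_tendsto hlim (Eventually.of_forall fun i => hmem i _ ?_)
    rw [mem_closedBall_zero_iff, norm_smul, Real.norm_of_nonneg (div_nonneg (hu₀ i) hs.le)]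
    calc u i / s * ‖c‖ ≤ u i / s * s := by
          gcongr
          · exact div_nonneg (hu₀ i) hs.le
          · exact mem_closedBall_zero_iff.mp hc
      _ = u i := div_mul_cancel₀ _ hs.ne'

theorem two_mul_le_diam_of_mem_innerParallel (hn : 0 < n) (hA : IsBounded A) (hr : 0 ≤ r)
    {t : EuclideanSpace ℝ (Fin n)} (ht : t ∈ innerParallel A r) : 2 * r ≤ diam A := by
  have : Nonempty (Fin n) := ⟨⟨0, hn⟩⟩
  obtain ⟨e, he⟩ := exists_norm_eq (EuclideanSpace ℝ (Fin n)) hr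
  have h₁ := ht e (mem_closedBall_zero_iff.mpr he.le)
  have h₂ := ht (-e) (mem_closedBall_zero_iff.mpr (by rw [norm_neg, he]))
  calc 2 * r = dist (t + e) (t + -e) := by
        rw [dist_eq_norm, add_sub_add_left_eq_sub, sub_neg_eq_add, ← two_smul ℝ, norm_smul,
          he, Real.norm_two]
    _ ≤ diam A := dist_le_diam_of_mem hA h₁ h₂

end InnerParallel

section RegSet

variable {n : ℕ} {A : Set (EuclideanSpace ℝ (Fin n))} {s μ : ℝ}

theorem zero_mem_regSet (A : Set (EuclideanSpace ℝ (Fin n))) : (0 : ℝ) ∈ regSet A := by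
  refine ⟨le_rfl, ?_⟩
  have : innerParallel A 0 = A := by ext t; simp [innerParallel]
  rw [this, closedBall_zero, add_singleton]
  simp

theorem bddAbove_regSet (hn : 0 < n) (hne : A.Nonempty) (hA : IsBounded A) :
    BddAbove (regSet A) := by
  refine ⟨diam A / 2, fun r ⟨hr, hreg⟩ => ?_⟩
  rw [hreg] at hne
  obtain ⟨_, ⟨t, ht, -⟩⟩ := hne
  linarith [two_mul_le_diam_of_mem_innerParallel hn hA hr ht]

theorem isClosed_regSet (hA : IsCompact A) : IsClosed (regSet A) := by
  refine IsSeqClosed.isClosed fun {u s} hu hlim => ?_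
  have hu₀ : ∀ k, 0 ≤ u k := fun k => (hu k).1
  have hs : 0 ≤ s := ge_of_tendsto' hlim hu₀
  refine ⟨hs, Subset.antisymm (fun a ha => ?_) (innerParallel_add_closedBall_subset A s)⟩
  have hdecomp : ∀ k, ∃ t ∈ innerParallel A (u k), dist a t ≤ u k := fun k => by
    rw [(hu k).2] at ha
    obtain ⟨t, ht, b, hb, rfl⟩ := ha
    exact ⟨t, ht, by simpa [dist_eq_norm] using hb⟩
  choose t ht hdist using hdecomp
  obtain ⟨t₀, -, φ, hφ, htφ⟩ :=
    hA.tendsto_subseq fun k => innerParallel_subset (hu₀ k) (ht k)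
  have hlimφ := hlim.comp hφ.tendsto_atTop
  have ht₀ : t₀ ∈ innerParallel A s :=
    mem_innerParallel_of_tendsto hA.isClosed (fun _ => hu₀ _) hlimφ htφ fun _ => ht _
  have hdist₀ : dist a t₀ ≤ s :=
    le_of_tendsto_of_tendsto (tendsto_const_nhds.dist htφ) hlimφ
      (Eventually.of_forall fun _ => hdist _)
  exact ⟨t₀, ht₀, a - t₀, by rwa [mem_closedBall_zero_iff, ← dist_eq_norm], add_sub_cancel t₀ a⟩

theorem isGreatest_sSup_regSet (hn : 0 < n) (hne : A.Nonempty) (hA : IsCompact A) :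
    IsGreatest (regSet A) (sSup (regSet A)) :=
  (isClosed_regSet hA).isGreatest_csSup ⟨0, zero_mem_regSet A⟩
    (bddAbove_regSet hn hne hA.isBounded)

theorem add_mem_regSet (hs : s ∈ regSet A) (hμ : μ ∈ regSet (innerParallel A s)) :
    s + μ ∈ regSet A := by
  refine ⟨add_nonneg hs.1 hμ.1, ?_⟩
  rw [← innerParallel_innerParallel hs.1 hμ.1]
  calc A = innerParallel A s + closedBall 0 s := hs.2
    _ = innerParallel (innerParallel A s) μ + closedBall 0 μ + closedBall 0 s := by rw [← hμ.2]
    _ = innerParallel (innerParallel A s) μ + closedBall 0 (s + μ) := by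
      rw [add_assoc, closedBall_add_closedBall hμ.1 hs.1, add_zero, add_comm μ]

theorem irredBody_innerParallel (hs : IsGreatest (regSet A) s) :
    IrredBody (innerParallel A s) := fun μ hμ hreg => by
  linarith [hs.2 (add_mem_regSet hs.1 ⟨hμ, hreg⟩)]

theorem eq_innerParallel_of_irredBody {B : Set (EuclideanSpace ℝ (Fin n))} {r : ℝ}
    (hs : IsGreatest (regSet A) s) (hBc : IsCompact B) (hB : Convex ℝ B) (hr : 0 ≤ r)
    (hirr : IrredBody B) (hAB : A = B + closedBall 0 r) : B = innerParallel A s ∧ r = s := by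
  have hBA : innerParallel A r = B := hAB ▸ innerParallel_add_closedBall hB hBc.isClosed hr
  have hrs : r ≤ s := hs.2 ⟨hr, by rwa [hBA]⟩
  have hμ : 0 ≤ s - r := sub_nonneg.mpr hrs
  have hAs : innerParallel A s = innerParallel B (s - r) := by
    rw [← hBA, innerParallel_innerParallel hr hμ, add_sub_cancel]
  have hsum :
      B + closedBall 0 r = innerParallel B (s - r) + closedBall 0 (s - r) + closedBall 0 r := by
    rw [← hAB, add_assoc, closedBall_add_closedBall hμ hr, add_zero, sub_add_cancel, ← hAs]
    exact hs.1.2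
  have hball : (closedBall (0 : EuclideanSpace ℝ (Fin n)) r).Nonempty :=
    nonempty_closedBall.mpr hr
  have hreg : B = innerParallel B (s - r) + closedBall 0 (s - r) :=
    Subset.antisymm
      (((hB.innerParallel _).add (convex_closedBall 0 _)).subset_of_add_subset_add
        ((hBc.innerParallel hμ).add (isCompact_closedBall 0 _)).isClosed hball
        isBounded_closedBall hsum.subset)
      (hB.subset_of_add_subset_add hBc.isClosed hball isBounded_closedBall hsum.symm.subset)
  obtain rfl : r = s := by linarith [hirr _ hμ hreg]
  exact ⟨hBA.symm, rfl⟩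

end RegSet

theorem stmt18_general {n : ℕ} (hn : 0 < n) (A : Set (EuclideanSpace ℝ (Fin n)))
    (hne : A.Nonempty) (hcomp : IsCompact A) :
    (0 ≤ sSup (regSet A) ∧
     IrredBody (innerParallel A (sSup (regSet A))) ∧
     A = innerParallel A (sSup (regSet A)) +
       Metric.closedBall 0 (sSup (regSet A))) ∧
    (∀ (B : Set (EuclideanSpace ℝ (Fin n))) (lam : ℝ),
      B.Nonempty → IsCompact B → Convex ℝ B → 0 ≤ lam → IrredBody B →
      A = B + Metric.closedBall 0 lam →
      B = innerParallel A (sSup (regSet A)) ∧ lam = sSup (regSet A)) := by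
  have hs := isGreatest_sSup_regSet hn hne hcomp
  exact ⟨⟨hs.1.1, irredBody_innerParallel hs, hs.1.2⟩,
    fun B lam _ hBc hB hlam hirr hAB => eq_innerParallel_of_irredBody hs hBc hB hlam hirr hAB⟩

theorem stmt18 {n : ℕ} (hn : 0 < n) (A : Set (EuclideanSpace ℝ (Fin n)))
    (hne : A.Nonempty) (hcomp : IsCompact A) (hconv : Convex ℝ A) :
    (0 ≤ sSup (regSet A) ∧
     IrredBody (innerParallel A (sSup (regSet A))) ∧
     A = innerParallel A (sSup (regSet A)) +
       Metric.closedBall 0 (sSup (regSet A))) ∧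
    (∀ (B : Set (EuclideanSpace ℝ (Fin n))) (lam : ℝ),
      B.Nonempty → IsCompact B → Convex ℝ B → 0 ≤ lam → IrredBody B →
      A = B + Metric.closedBall 0 lam →
      B = innerParallel A (sSup (regSet A)) ∧ lam = sSup (regSet A)) :=
  stmt18_general hn A hne hcomp
end
end
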